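/- Let p, q, ρ be nonnegative integers, and let Q be the poset of all subsets S ⊆ {1,...,p+q} with |{1,...,p} \ S| ≤ ρ and |S \ {1,...,p}| ≤ ρ, ordered by inclusion. Then Q is a LYM poset: for every antichain A ⊆ Q, ∑_{S∈A} 1/M_{r(S)} ≤ 1, where for S with i = |{1,...,p} \ S| and j = |S \ {1,...,p}| the rank is r(S) = min(p,ρ) − i + j, and M_m = ∑ C(p,i)·C(q,j), the sum over pairs (i,j) with 0 ≤ i ≤ min(p,ρ), 0 ≤ j ≤ min(q,ρ), and min(p,ρ) − i + j = m. -/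

import Mathlib

open Finset

/-- Membership in the smallest convex subposet of `(2^{[p+q]}, ⊆)` containing the
Hamming ball `B_ρ[p,q]`: subsets `S ⊆ {1,…,p+q}` with `|{1,…,p} \ S| ≤ ρ` and
`|S \ {1,…,p}| ≤ ρ`. -/
def memConvexHull (p q ρ : ℕ) (S : Finset ℕ) : Prop :=
  S ⊆ Finset.Icc 1 (p + q) ∧ (Finset.Icc 1 p \ S).card ≤ ρ ∧ (S \ Finset.Icc 1 p).card ≤ ρ

/-- The rank of `S`: with `i = |{1,…,p} \ S|` and `j = |S \ {1,…,p}|`, the rank is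
`min p ρ - i + j`. -/
def hammingRank (p ρ : ℕ) (S : Finset ℕ) : ℕ :=
  min p ρ - (Finset.Icc 1 p \ S).card + (S \ Finset.Icc 1 p).card

/-- The size of the `m`-th layer: `M_m = ∑ C(p,i) C(q,j)` over pairs `(i,j)` with
`0 ≤ i ≤ min p ρ`, `0 ≤ j ≤ min q ρ` and `min p ρ - i + j = m`. -/
def convexHullLayerSize (p q ρ m : ℕ) : ℕ :=
  ∑ ij ∈ (Finset.range (min p ρ + 1) ×ˢ Finset.range (min q ρ + 1)).filter
      (fun ij => min p ρ - ij.1 + ij.2 = m),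
    p.choose ij.1 * q.choose ij.2

/-!
The levels of the hull are normalized-matched, which gives the LYM inequality by the usual
push-up argument. The normalized matching comes from a fractional flow along covers in which
every set of level `m` sends out `1 / M_m` and every set of level `m + 1` receives `1 / M_{m+1}`.
A set of level `m` with `j` elements outside `{1, …, p}` lies in block `(m, j)`; block `(m, j)`
sends flow to blocks `(m + 1, j)` and `(m + 1, j + 1)`, in amounts read off from the cumulative
distributions of `j` on the two levels. These amounts are nonnegative because the distribution on
level `m + 1` is squeezed between that on level `m` and its shift by one, which in turn follows
from the log-concavity of the rows of Pascal's triangle.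
-/

theorem Finset.card_mul_le_card_filter_exists_mul_of_flow {α β : Type*} {X : Finset α}
    {Y : Finset β} {r : α → β → Prop} [DecidableRel r] {w : α → β → ℝ} {a b : ℝ}
    (hw : ∀ x ∈ X, ∀ y ∈ Y, 0 ≤ w x y)
    (hwr : ∀ x ∈ X, ∀ y ∈ Y, w x y ≠ 0 → r x y)
    (hout : ∀ x ∈ X, ∑ y ∈ Y, w x y = a) (hin : ∀ y ∈ Y, ∑ x ∈ X, w x y ≤ b)
    {F : Finset α} (hF : F ⊆ X) :
    #F * a ≤ #{y ∈ Y | ∃ x ∈ F, r x y} * b := by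
  calc #F * a = ∑ y ∈ Y, ∑ x ∈ F, w x y := by
        rw [sum_comm, ← nsmul_eq_mul, ← sum_const]
        exact sum_congr rfl fun x hx => (hout x (hF hx)).symm
    _ = ∑ y ∈ Y with ∃ x ∈ F, r x y, ∑ x ∈ F, w x y := by
        refine (sum_filter_of_ne fun y hy hne => ?_).symm
        obtain ⟨x, hx, hwx⟩ := exists_ne_zero_of_sum_ne_zero hne
        exact ⟨x, hx, hwr x (hF hx) y hy hwx⟩
    _ ≤ ∑ y ∈ Y with ∃ x ∈ F, r x y, b := by
        refine sum_le_sum fun y hy => ?_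
        have hyY := (mem_filter.1 hy).1
        exact (sum_le_sum_of_subset_of_nonneg hF fun x hx _ => hw x hx y hyY).trans (hin y hyY)
    _ = _ := by rw [sum_const, nsmul_eq_mul]

section NormalizedMatching

variable {α : Type*} [PartialOrder α] [DecidableEq α] [DecidableLE α] {Q A : Finset α}
  {r : α → ℕ} {M : ℕ → ℝ} {n : ℕ}

theorem IsAntichain.sum_card_filter_div_le_of_normalizedMatching
    (hA : IsAntichain (· ≤ ·) (A : Set α)) (hAQ : A ⊆ Q) (hM : ∀ k ≤ n, 0 < M k)
    (hmatch : ∀ m < n, ∀ F ⊆ {x ∈ Q | r x = m},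
      #F / M m ≤ #{y ∈ {y ∈ Q | r y = m + 1} | ∃ x ∈ F, x ≤ y} / M (m + 1))
    {m : ℕ} (hm : m ≤ n) :
    ∑ k ∈ range (m + 1), (#{x ∈ A | r x = k} : ℝ) / M k ≤
      #{y ∈ Q | r y = m ∧ ∃ a ∈ A, a ≤ y} / M m := by
  induction m with
  | zero =>
    rw [sum_range_one]
    gcongr
    · exact (hM 0 hm).le
    · intro x hx
      simp only [mem_filter] at hx ⊢
      exact ⟨hAQ hx.1, hx.2, x, hx.1, le_rfl⟩
  | succ m ih =>
    set U := {y ∈ Q | r y = m ∧ ∃ a ∈ A, a ≤ y}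
    set V := {y ∈ {y ∈ Q | r y = m + 1} | ∃ x ∈ U, x ≤ y}
    have hdisj : Disjoint {x ∈ A | r x = m + 1} V := by
      refine disjoint_left.2 fun y hy hy' => ?_
      simp only [U, V, mem_filter] at hy hy'
      obtain ⟨⟨-, hry⟩, x, ⟨-, hrx, a, ha, hax⟩, hxy⟩ := hy'
      have hay : a = y := hA.eq ha hy.1 (hax.trans hxy)
      rw [le_antisymm hxy (hay ▸ hax)] at hrx
      omega
    have hsub :
        {x ∈ A | r x = m + 1} ∪ V ⊆ {y ∈ Q | r y = m + 1 ∧ ∃ a ∈ A, a ≤ y} := by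
      intro y hy
      simp only [U, V, mem_union, mem_filter] at hy ⊢
      rcases hy with ⟨hyA, hry⟩ | ⟨⟨hyQ, hry⟩, x, ⟨-, -, a, ha, hax⟩, hxy⟩
      · exact ⟨hAQ hyA, hry, y, hyA, le_rfl⟩
      · exact ⟨hyQ, hry, a, ha, hax.trans hxy⟩
    have hU : U ⊆ {x ∈ Q | r x = m} := fun y hy => by
      simp only [U, mem_filter] at hy ⊢
      exact ⟨hy.1, hy.2.1⟩
    calc ∑ k ∈ range (m + 1 + 1), (#{x ∈ A | r x = k} : ℝ) / M k
        ≤ #U / M m + #{x ∈ A | r x = m + 1} / M (m + 1) := by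
          rw [sum_range_succ]
          gcongr
          exact ih (by omega)
      _ ≤ #V / M (m + 1) + #{x ∈ A | r x = m + 1} / M (m + 1) := by
          gcongr ?_ + _
          exact hmatch m (by omega) U hU
      _ ≤ #{y ∈ Q | r y = m + 1 ∧ ∃ a ∈ A, a ≤ y} / M (m + 1) := by
          rw [← add_div, add_comm]
          gcongr
          · exact (hM _ hm).le
          · exact_mod_cast (card_union_of_disjoint hdisj).symm.le.trans (card_le_card hsub)

theorem IsAntichain.sum_one_div_le_one_of_normalizedMatching
    (hA : IsAntichain (· ≤ ·) (A : Set α)) (hAQ : A ⊆ Q) (hr : ∀ x ∈ Q, r x ≤ n)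
    (hM : ∀ k ≤ n, 0 < M k)
    (hmatch : ∀ m < n, ∀ F ⊆ {x ∈ Q | r x = m},
      #F / M m ≤ #{y ∈ {y ∈ Q | r y = m + 1} | ∃ x ∈ F, x ≤ y} / M (m + 1))
    (htop : #{x ∈ Q | r x = n} ≤ M n) :
    ∑ x ∈ A, 1 / M (r x) ≤ 1 := by
  calc ∑ x ∈ A, 1 / M (r x)
      = ∑ k ∈ range (n + 1), (#{x ∈ A | r x = k} : ℝ) / M k := by
        rw [← sum_fiberwise_of_maps_to (t := range (n + 1)) (g := r)
          fun x hx => mem_range.2 (Nat.lt_succ_of_le (hr x (hAQ hx)))]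
        refine sum_congr rfl fun k _ => ?_
        rw [sum_congr rfl fun x hx => by rw [(mem_filter.1 hx).2], sum_const, nsmul_eq_mul,
          mul_one_div]
    _ ≤ #{y ∈ Q | r y = n ∧ ∃ a ∈ A, a ≤ y} / M n :=
        hA.sum_card_filter_div_le_of_normalizedMatching hAQ hM hmatch le_rfl
    _ ≤ #{x ∈ Q | r x = n} / M n := by
        gcongr
        · exact (hM n le_rfl).le
        · exact fun h => h.1
    _ ≤ 1 := (div_le_one (hM n le_rfl)).2 htop

end NormalizedMatching

instance Finset.decidableRelCovBy {α : Type*} [DecidableEq α] :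
    DecidableRel ((· ⋖ ·) : Finset α → Finset α → Prop) :=
  fun _ _ => decidable_of_iff _ covBy_iff_card_sdiff_eq_one.symm

theorem Finset.sum_ite_covBy_eq_sum_insert {α M : Type*} [DecidableEq α] [AddCommMonoid M]
    {U : Finset α} {G : Finset (Finset α)} (hG : ∀ y ∈ G, y ⊆ U) (x : Finset α)
    (f : Finset α → M) :
    ∑ y ∈ G, (if x ⋖ y then f y else 0) =
      ∑ e ∈ U \ x, if insert e x ∈ G then f (insert e x) else 0 := by
  rw [← sum_filter, ← sum_filter]
  have hG' : {y ∈ G | x ⋖ y} = {e ∈ U \ x | insert e x ∈ G}.image (insert · x) := by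
    ext y
    simp only [mem_filter, mem_image, mem_sdiff, covBy_iff_exists_insert]
    constructor
    · rintro ⟨hy, e, he, rfl⟩
      exact ⟨e, ⟨⟨hG _ hy (mem_insert_self e x), he⟩, hy⟩, rfl⟩
    · rintro ⟨e, ⟨⟨-, he⟩, hy⟩, rfl⟩
      exact ⟨hy, e, he, rfl⟩
  rw [hG', sum_image fun a ha b _ hab =>
    (insert_inj (mem_sdiff.1 (mem_filter.1 ha).1).2).1 hab]

theorem Finset.sum_ite_covBy_eq_sum_erase {α M : Type*} [DecidableEq α] [AddCommMonoid M]
    (G : Finset (Finset α)) (y : Finset α) (f : Finset α → M) :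
    ∑ x ∈ G, (if x ⋖ y then f x else 0) =
      ∑ e ∈ y, if y.erase e ∈ G then f (y.erase e) else 0 := by
  rw [← sum_filter, ← sum_filter]
  have hG : {x ∈ G | x ⋖ y} = {e ∈ y | y.erase e ∈ G}.image y.erase := by
    ext x
    simp only [mem_filter, mem_image, covBy_iff_exists_erase]
    constructor
    · rintro ⟨hx, e, he, rfl⟩
      exact ⟨e, ⟨he, hx⟩, rfl⟩
    · rintro ⟨e, ⟨he, hx⟩, rfl⟩
      exact ⟨hx, e, he, rfl⟩
  rw [hG, sum_image fun a ha b hb hab =>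
    y.erase_injOn (mem_filter.1 ha).1 (mem_filter.1 hb).1 hab]

theorem Finset.sum_range_mul_sum_range_le_of_cross {R : Type*} [CommSemiring R] [PartialOrder R]
    [IsOrderedAddMonoid R] (g h : ℕ → R) {t n : ℕ} (htn : t ≤ n)
    (hc : ∀ j k, j < k → h j * g k ≤ g j * h k) :
    (∑ j ∈ range t, h j) * ∑ k ∈ range n, g k ≤
      (∑ j ∈ range t, g j) * ∑ k ∈ range n, h k := by
  have hsplit (f : ℕ → R) :
      ∑ k ∈ range n, f k = ∑ k ∈ range t, f k + ∑ k ∈ Ico t n, f k :=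
    (sum_range_add_sum_Ico _ htn).symm
  rw [hsplit g, hsplit h, mul_add, mul_add, mul_comm (∑ j ∈ range t, h j)]
  gcongr
  rw [sum_mul_sum, sum_mul_sum]
  exact sum_le_sum fun j hj => sum_le_sum fun k hk =>
    hc j k ((mem_range.1 hj).trans_le (mem_Ico.1 hk).1)

theorem Nat.choose_mul_choose_succ_le (n : ℕ) {u v : ℕ} (huv : u ≤ v) :
    n.choose u * n.choose (v + 1) ≤ n.choose (u + 1) * n.choose v := by
  refine le_of_mul_le_mul_right (a := (u + 1) * (v + 1)) ?_ (by positivity)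
  have hu := Nat.choose_succ_right_eq n u
  have hv := Nat.choose_succ_right_eq n v
  calc n.choose u * n.choose (v + 1) * ((u + 1) * (v + 1))
      = n.choose u * (n.choose (v + 1) * (v + 1)) * (u + 1) := by ring
    _ = n.choose u * n.choose v * ((n - v) * (u + 1)) := by rw [hv]; ring
    _ ≤ n.choose u * n.choose v * ((n - u) * (v + 1)) := by gcongr
    _ = n.choose (u + 1) * (u + 1) * n.choose v * (v + 1) := by rw [hu]; ring
    _ = n.choose (u + 1) * n.choose v * ((u + 1) * (v + 1)) := by ring

def truncatedChoose (n k : ℕ) (i : ℤ) : ℕ :=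
  if 0 ≤ i ∧ i ≤ k then n.choose i.toNat else 0

theorem truncatedChoose_natCast {n k i : ℕ} (hi : i ≤ k) :
    truncatedChoose n k i = n.choose i := by
  simp [truncatedChoose, hi]

theorem truncatedChoose_eq_zero {n k : ℕ} {i : ℤ} (hi : i < 0 ∨ (k : ℤ) < i) :
    truncatedChoose n k i = 0 := by
  rw [truncatedChoose, if_neg (by omega)]

theorem truncatedChoose_mul_le (n k : ℕ) {u v : ℤ} (huv : u ≤ v) :
    truncatedChoose n k u * truncatedChoose n k (v + 1) ≤
      truncatedChoose n k (u + 1) * truncatedChoose n k v := by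
  rcases lt_or_ge u 0 with hu | hu
  · simp [truncatedChoose_eq_zero (Or.inl hu)]
  rcases lt_or_ge (k : ℤ) (v + 1) with hv | hv
  · simp [truncatedChoose_eq_zero (Or.inr hv)]
  lift u to ℕ using hu
  lift v to ℕ using by omega
  have := Nat.choose_mul_choose_succ_le n (u := u) (v := v) (by omega)
  rw [← Nat.cast_succ, ← Nat.cast_succ]
  rwa [truncatedChoose_natCast (by omega), truncatedChoose_natCast (by omega),
    truncatedChoose_natCast (by omega), truncatedChoose_natCast (by omega)]

namespace HammingBallHull

variable {p q ρ : ℕ}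

variable (p q ρ) in
/-- The number of sets of level `m` with exactly `j` elements outside `{1, …, p}`; such a set
misses `min p ρ + j - m` elements of `{1, …, p}`. -/
def blockSize (m j : ℕ) : ℕ :=
  truncatedChoose p (min p ρ) ((min p ρ : ℕ) + j - m) * truncatedChoose q (min q ρ) j

theorem blockSize_eq_zero_of_min_lt {m j : ℕ} (hj : min q ρ < j) : blockSize p q ρ m j = 0 := by
  rw [blockSize, truncatedChoose_eq_zero (n := q) (Or.inr (by omega)), mul_zero]

theorem blockSize_eq_zero_of_lt {m j : ℕ} (hj : m < j) : blockSize p q ρ m j = 0 := by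
  rw [blockSize, truncatedChoose_eq_zero (Or.inr (by omega)), zero_mul]

theorem blockSize_pos {m j : ℕ} (h₁ : m ≤ min p ρ + j) (h₂ : j ≤ m)
    (h₃ : j ≤ min q ρ) :
    0 < blockSize p q ρ m j := by
  rw [blockSize, ← Nat.cast_add, ← Nat.cast_sub h₁, truncatedChoose_natCast (by omega),
    truncatedChoose_natCast h₃]
  exact Nat.mul_pos (Nat.choose_pos (by omega)) (Nat.choose_pos (by omega))

theorem convexHullLayerSize_eq_sum_blockSize (m : ℕ) :
    convexHullLayerSize p q ρ m = ∑ j ∈ range (min q ρ + 1), blockSize p q ρ m j := by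
  rw [convexHullLayerSize, sum_filter, sum_product, sum_comm]
  refine sum_congr rfl fun j hj => ?_
  have hj : j ≤ min q ρ := Nat.lt_succ_iff.1 (mem_range.1 hj)
  rw [blockSize, truncatedChoose_natCast hj]
  by_cases h : m ≤ min p ρ + j ∧ j ≤ m
  · rw [sum_eq_single_of_mem (min p ρ + j - m) (mem_range.2 (by omega))
      fun i hi hne => if_neg (by have := mem_range.1 hi; omega), if_pos (by omega),
      ← Nat.cast_add, ← Nat.cast_sub h.1, truncatedChoose_natCast (by omega)]
  · rw [sum_eq_zero fun i hi => if_neg (by have := mem_range.1 hi; omega),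
      truncatedChoose_eq_zero (by omega), zero_mul]

theorem sum_range_blockSize {m t : ℕ} (ht : m < t ∨ min q ρ < t) :
    ∑ j ∈ range t, blockSize p q ρ m j = convexHullLayerSize p q ρ m := by
  rw [convexHullLayerSize_eq_sum_blockSize]
  rcases le_total t (min q ρ + 1) with htq | htq
  · exact sum_subset (range_subset_range.2 htq) fun j hj hjt =>
      blockSize_eq_zero_of_lt (by simp only [mem_range] at hj hjt; omega)
  · exact (sum_subset (range_subset_range.2 htq) fun j hj hjt =>
      blockSize_eq_zero_of_min_lt (by simp only [mem_range] at hj hjt; omega)).symm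

theorem convexHullLayerSize_pos {m : ℕ} (hm : m ≤ min p ρ + min q ρ) :
    0 < convexHullLayerSize p q ρ m := by
  rw [convexHullLayerSize_eq_sum_blockSize]
  refine sum_pos' (fun j _ => Nat.zero_le _) ⟨m - min p ρ, mem_range.2 (by omega), ?_⟩
  exact blockSize_pos (by omega) (by omega) (by omega)

theorem convexHullLayerSize_top :
    convexHullLayerSize p q ρ (min p ρ + min q ρ) = q.choose (min q ρ) := by
  rw [convexHullLayerSize_eq_sum_blockSize, sum_eq_single_of_mem (min q ρ) (by simp)
    fun j hj hne => ?_]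
  · rw [blockSize, truncatedChoose_natCast le_rfl, Nat.cast_add, sub_self]
    simp [truncatedChoose]
  rw [blockSize, truncatedChoose_eq_zero (Or.inl (by simp only [mem_range] at hj; omega)),
    zero_mul]

theorem blockSize_succ_mul_le {m j k : ℕ} (hjk : j ≤ k) :
    blockSize p q ρ (m + 1) j * blockSize p q ρ m k ≤
      blockSize p q ρ m j * blockSize p q ρ (m + 1) k := by
  have hrow (i : ℕ) :
      ((min p ρ : ℕ) : ℤ) + i - (m + 1 : ℕ) + 1 = (min p ρ : ℕ) + i - m := by
    push_cast; ring
  have := truncatedChoose_mul_le p (min p ρ) (u := (min p ρ : ℕ) + j - (m + 1 : ℕ))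
    (v := (min p ρ : ℕ) + k - (m + 1 : ℕ)) (by omega)
  rw [hrow, hrow] at this
  simp only [blockSize]
  calc _ = _ := mul_mul_mul_comm _ _ _ _
    _ ≤ _ := Nat.mul_le_mul_right _ this
    _ = _ := mul_mul_mul_comm _ _ _ _

theorem blockSize_mul_succ_succ_le {m j k : ℕ} (hjk : j ≤ k) :
    blockSize p q ρ m j * blockSize p q ρ (m + 1) (k + 1) ≤
      blockSize p q ρ (m + 1) (j + 1) * blockSize p q ρ m k := by
  have hrow (i : ℕ) :
      ((min p ρ : ℕ) : ℤ) + (i + 1 : ℕ) - (m + 1 : ℕ) = (min p ρ : ℕ) + i - m := by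
    push_cast; ring
  have := truncatedChoose_mul_le q (min q ρ) (u := j) (v := k) (by omega)
  simp only [blockSize, hrow]
  push_cast
  calc _ = _ := mul_mul_mul_comm _ _ _ _
    _ ≤ _ := Nat.mul_le_mul_left _ this
    _ = _ := mul_mul_mul_comm _ _ _ _

theorem mul_blockSize_succ_eq {m j : ℕ} (h₁ : m + 1 ≤ min p ρ + j) (h₂ : j ≤ m) :
    (p - (min p ρ + j - (m + 1))) * blockSize p q ρ (m + 1) j =
      (min p ρ + j - m) * blockSize p q ρ m j := by
  obtain ⟨i, hi⟩ : ∃ i, min p ρ + j = m + 1 + i := ⟨min p ρ + j - (m + 1), by omega⟩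
  have hrow : ((min p ρ : ℕ) : ℤ) + j - (m + 1 : ℕ) = (i : ℕ) := by omega
  have hrow' : ((min p ρ : ℕ) : ℤ) + j - m = (i + 1 : ℕ) := by omega
  rw [blockSize, blockSize, hrow, hrow', truncatedChoose_natCast (n := p) (i := i) (by omega),
    truncatedChoose_natCast (n := p) (i := i + 1) (by omega),
    show min p ρ + j - (m + 1) = i by omega, show min p ρ + j - m = i + 1 by omega]
  calc (p - i) * (p.choose i * truncatedChoose q (min q ρ) j)
      = p.choose i * (p - i) * truncatedChoose q (min q ρ) j := by ring
    _ = p.choose (i + 1) * (i + 1) * truncatedChoose q (min q ρ) j := by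
        rw [Nat.choose_succ_right_eq]
    _ = (i + 1) * (p.choose (i + 1) * truncatedChoose q (min q ρ) j) := by ring

theorem mul_blockSize_succ_succ_eq {m j : ℕ} (hj : j < min q ρ) :
    (j + 1) * blockSize p q ρ (m + 1) (j + 1) = (q - j) * blockSize p q ρ m j := by
  have hrow :
      ((min p ρ : ℕ) : ℤ) + (j + 1 : ℕ) - (m + 1 : ℕ) = (min p ρ : ℕ) + j - m := by
    push_cast; ring
  rw [blockSize, blockSize, hrow, truncatedChoose_natCast (n := q) (i := j + 1) hj,
    truncatedChoose_natCast (n := q) (i := j) hj.le]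
  calc (j + 1) * (truncatedChoose p (min p ρ) ((min p ρ : ℕ) + j - m) * q.choose (j + 1))
      = truncatedChoose p (min p ρ) ((min p ρ : ℕ) + j - m) * (q.choose (j + 1) * (j + 1)) := by
        ring
    _ = (q - j) * (truncatedChoose p (min p ρ) ((min p ρ : ℕ) + j - m) * q.choose j) := by
        rw [Nat.choose_succ_right_eq]; ring

variable (p q ρ) in
noncomputable def excessCDF (m t : ℕ) : ℝ :=
  (∑ j ∈ range t, (blockSize p q ρ m j : ℝ)) / convexHullLayerSize p q ρ m

theorem excessCDF_succ_sub (m t : ℕ) :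
    excessCDF p q ρ m (t + 1) - excessCDF p q ρ m t =
      blockSize p q ρ m t / convexHullLayerSize p q ρ m := by
  rw [excessCDF, excessCDF, sum_range_succ, add_div, add_sub_cancel_left]

theorem excessCDF_zero (m : ℕ) : excessCDF p q ρ m 0 = 0 := by
  simp [excessCDF]

theorem excessCDF_eq_zero {m t : ℕ} (ht : min p ρ + t ≤ m) : excessCDF p q ρ m t = 0 := by
  rw [excessCDF, sum_eq_zero fun j hj => ?_, zero_div]
  rw [blockSize, truncatedChoose_eq_zero (Or.inl (by have := mem_range.1 hj; omega)), zero_mul,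
    Nat.cast_zero]

theorem excessCDF_eq_one {m t : ℕ} (hm : m ≤ min p ρ + min q ρ)
    (ht : m < t ∨ min q ρ < t) :
    excessCDF p q ρ m t = 1 := by
  rw [excessCDF, ← Nat.cast_sum, sum_range_blockSize ht,
    div_self (by exact_mod_cast (convexHullLayerSize_pos hm).ne')]

theorem excessCDF_succ_le {m : ℕ} (hm : m + 1 ≤ min p ρ + min q ρ) (t : ℕ) :
    excessCDF p q ρ (m + 1) t ≤ excessCDF p q ρ m t := by
  have key := sum_range_mul_sum_range_le_of_cross (blockSize p q ρ m) (blockSize p q ρ (m + 1))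
    (t := t) (n := t + min q ρ + 1) (by omega) fun j k hjk => blockSize_succ_mul_le hjk.le
  rw [sum_range_blockSize (m := m) (t := t + min q ρ + 1) (by omega),
    sum_range_blockSize (m := m + 1) (t := t + min q ρ + 1) (by omega)] at key
  rw [excessCDF, excessCDF, div_le_div_iff₀ (by exact_mod_cast convexHullLayerSize_pos hm)
    (by exact_mod_cast convexHullLayerSize_pos (by omega))]
  exact_mod_cast key

theorem excessCDF_le_succ_succ {m : ℕ} (hm : m + 1 ≤ min p ρ + min q ρ) (t : ℕ) :
    excessCDF p q ρ m t ≤ excessCDF p q ρ (m + 1) (t + 1) := by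
  set g : ℕ → ℕ := fun j => if j = 0 then 0 else blockSize p q ρ m (j - 1)
  have hg (s : ℕ) : ∑ j ∈ range (s + 1), g j = ∑ j ∈ range s, blockSize p q ρ m j := by
    simp [g, sum_range_succ']
  have key := sum_range_mul_sum_range_le_of_cross (blockSize p q ρ (m + 1)) g
    (t := t + 1) (n := t + min q ρ + 2) (by omega) fun j k hjk => by
      rcases j with _ | j
      · simp [g]
      obtain ⟨k, rfl⟩ : ∃ k', k = k' + 1 := ⟨k - 1, by omega⟩
      simpa [g] using blockSize_mul_succ_succ_le (m := m) (by omega)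
  rw [hg, hg, sum_range_blockSize (m := m) (t := t + min q ρ + 1) (by omega),
    sum_range_blockSize (m := m + 1) (t := t + min q ρ + 2) (by omega)] at key
  rw [excessCDF, excessCDF,
    div_le_div_iff₀ (by exact_mod_cast convexHullLayerSize_pos (by omega))
      (by exact_mod_cast convexHullLayerSize_pos hm)]
  exact_mod_cast key

/- Block `(m, j)` sends `excessCDF (m + 1) (j + 1) - excessCDF m j` to block `(m + 1, j)` along
the covers adding an element of `{1, …, p}` (`min p ρ + j - m` per set), and the rest of its
`blockSize m j / M_m` to block `(m + 1, j + 1)` along the covers adding an element outside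
(`q - j` per set), equally on all these covers. -/

variable (p q ρ) in
noncomputable def insideWeight (m j : ℕ) : ℝ :=
  (excessCDF p q ρ (m + 1) (j + 1) - excessCDF p q ρ m j) /
    ((min p ρ + j - m : ℕ) * blockSize p q ρ m j)

variable (p q ρ) in
noncomputable def outsideWeight (m j : ℕ) : ℝ :=
  (excessCDF p q ρ m (j + 1) - excessCDF p q ρ (m + 1) (j + 1)) /
    ((q - j : ℕ) * blockSize p q ρ m j)

theorem insideWeight_nonneg {m : ℕ} (hm : m + 1 ≤ min p ρ + min q ρ) (j : ℕ) :
    0 ≤ insideWeight p q ρ m j :=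
  div_nonneg (sub_nonneg.2 (excessCDF_le_succ_succ hm j)) (by positivity)

theorem outsideWeight_nonneg {m : ℕ} (hm : m + 1 ≤ min p ρ + min q ρ) (j : ℕ) :
    0 ≤ outsideWeight p q ρ m j :=
  div_nonneg (sub_nonneg.2 (excessCDF_succ_le hm (j + 1))) (by positivity)

theorem insideWeight_eq_zero {m j : ℕ} (hm : m + 1 ≤ min p ρ + min q ρ) (hj : m < j) :
    insideWeight p q ρ m j = 0 := by
  rw [insideWeight, excessCDF_eq_one hm (Or.inl (by omega)),
    excessCDF_eq_one (by omega) (Or.inl hj), sub_self, zero_div]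

theorem outsideWeight_eq_zero {m j : ℕ} (hm : m + 1 ≤ min p ρ + min q ρ)
    (hj : min q ρ ≤ j) :
    outsideWeight p q ρ m j = 0 := by
  rw [outsideWeight, excessCDF_eq_one (by omega) (Or.inr (by omega)),
    excessCDF_eq_one hm (Or.inr (by omega)), sub_self, zero_div]

theorem mul_insideWeight_add_mul_outsideWeight_eq {m j : ℕ} (hm : m < min p ρ + min q ρ)
    (h₁ : m ≤ min p ρ + j) (h₂ : j ≤ m) (h₃ : j ≤ min q ρ) :
    ((min p ρ + j - m : ℕ) : ℝ) * insideWeight p q ρ m j +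
        ((q - j : ℕ) : ℝ) * outsideWeight p q ρ m j =
      1 / convexHullLayerSize p q ρ m := by
  have hN : (blockSize p q ρ m j : ℝ) ≠ 0 := by
    exact_mod_cast (blockSize_pos h₁ h₂ h₃).ne'
  have hin : ((min p ρ + j - m : ℕ) : ℝ) * insideWeight p q ρ m j =
      (excessCDF p q ρ (m + 1) (j + 1) - excessCDF p q ρ m j) / blockSize p q ρ m j := by
    rcases Nat.eq_zero_or_pos (min p ρ + j - m) with h | h
    · rw [h, excessCDF_eq_zero (by omega), excessCDF_eq_zero (by omega)]
      simp
    · rw [insideWeight]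
      field_simp
  have hout : ((q - j : ℕ) : ℝ) * outsideWeight p q ρ m j =
      (excessCDF p q ρ m (j + 1) - excessCDF p q ρ (m + 1) (j + 1)) / blockSize p q ρ m j := by
    rcases Nat.eq_zero_or_pos (q - j) with h | h
    · rw [h, excessCDF_eq_one (by omega) (Or.inr (by omega)),
        excessCDF_eq_one (by omega) (Or.inr (by omega))]
      simp
    · rw [outsideWeight]
      field_simp
  rw [hin, hout, ← add_div, show ∀ a b c : ℝ, a - b + (c - a) = c - b by intros; ring,
    excessCDF_succ_sub]
  field_simp

theorem mul_insideWeight_add_mul_outsideWeight_pred_eq {m j : ℕ} (h₁ : m + 1 ≤ min p ρ + j)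
    (h₂ : j ≤ m + 1) (h₃ : j ≤ min q ρ) :
    ((p - (min p ρ + j - (m + 1)) : ℕ) : ℝ) * insideWeight p q ρ m j +
        (j : ℝ) * outsideWeight p q ρ m (j - 1) = 1 / convexHullLayerSize p q ρ (m + 1) := by
  have hN : (blockSize p q ρ (m + 1) j : ℝ) ≠ 0 := by
    exact_mod_cast (blockSize_pos h₁ h₂ h₃).ne'
  have hin : ((p - (min p ρ + j - (m + 1)) : ℕ) : ℝ) * insideWeight p q ρ m j =
      (excessCDF p q ρ (m + 1) (j + 1) - excessCDF p q ρ m j) / blockSize p q ρ (m + 1) j := by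
    by_cases hjm : j ≤ m
    · have hN' : (blockSize p q ρ m j : ℝ) ≠ 0 := by
        exact_mod_cast (blockSize_pos (by omega) hjm h₃).ne'
      have hrow : ((p - (min p ρ + j - (m + 1)) : ℕ) : ℝ) * blockSize p q ρ (m + 1) j =
          ((min p ρ + j - m : ℕ) : ℝ) * blockSize p q ρ m j := by
        exact_mod_cast mul_blockSize_succ_eq h₁ hjm
      have hp : ((p - (min p ρ + j - (m + 1)) : ℕ) : ℝ) ≠ 0 := by
        exact_mod_cast (show p - (min p ρ + j - (m + 1)) ≠ 0 by omega)
      rw [insideWeight, ← hrow]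
      field_simp
    · rw [insideWeight_eq_zero (by omega) (by omega),
        excessCDF_eq_one (by omega) (Or.inl (by omega)),
        excessCDF_eq_one (by omega) (Or.inl (by omega))]
      simp
  have hout : (j : ℝ) * outsideWeight p q ρ m (j - 1) =
      (excessCDF p q ρ m j - excessCDF p q ρ (m + 1) j) / blockSize p q ρ (m + 1) j := by
    rcases j with _ | j
    · simp [excessCDF_zero]
    have hN' : (blockSize p q ρ m j : ℝ) ≠ 0 := by
      exact_mod_cast (blockSize_pos (by omega) (by omega) (by omega)).ne'
    have hcol : ((j + 1 : ℕ) : ℝ) * blockSize p q ρ (m + 1) (j + 1) =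
        ((q - j : ℕ) : ℝ) * blockSize p q ρ m j := by
      exact_mod_cast mul_blockSize_succ_succ_eq (m := m) (by omega)
    rw [add_tsub_cancel_right, outsideWeight, ← hcol]
    field_simp
  rw [hin, hout, ← add_div, sub_add_sub_cancel, excessCDF_succ_sub]
  field_simp

variable (p) in
def deficit (S : Finset ℕ) : ℕ := #(Icc 1 p \ S)

variable (p) in
def excess (S : Finset ℕ) : ℕ := #(S \ Icc 1 p)

theorem hammingRank_eq (S : Finset ℕ) :
    hammingRank p ρ S = min p ρ - deficit p S + excess p S := rfl

theorem deficit_le (S : Finset ℕ) : deficit p S ≤ p := by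
  simpa [deficit] using card_le_card (sdiff_subset (s := Icc 1 p) (t := S))

theorem card_Icc_sdiff_Icc : #(Icc 1 (p + q) \ Icc 1 p) = q := by
  rw [card_sdiff_of_subset (Icc_subset_Icc_right (by omega))]
  simp

theorem excess_le {S : Finset ℕ} (hS : S ⊆ Icc 1 (p + q)) : excess p S ≤ q :=
  (card_Icc_sdiff_Icc (p := p) (q := q)) ▸ card_le_card (sdiff_subset_sdiff hS subset_rfl)

theorem deficit_insert_of_mem {e : ℕ} {x : Finset ℕ} (he : e ∈ Icc 1 p) (hx : e ∉ x) :
    deficit p (insert e x) + 1 = deficit p x := by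
  rw [deficit, deficit, sdiff_insert, card_erase_add_one (mem_sdiff.2 ⟨he, hx⟩)]

theorem excess_insert_of_mem {e : ℕ} (x : Finset ℕ) (he : e ∈ Icc 1 p) :
    excess p (insert e x) = excess p x := by
  rw [excess, excess, insert_sdiff_of_mem _ he]

theorem deficit_insert_of_notMem {e : ℕ} (x : Finset ℕ) (he : e ∉ Icc 1 p) :
    deficit p (insert e x) = deficit p x := by
  rw [deficit, deficit, sdiff_insert, erase_eq_of_notMem fun h => he (mem_sdiff.1 h).1]

theorem excess_insert_of_notMem {e : ℕ} {x : Finset ℕ} (he : e ∉ Icc 1 p) (hx : e ∉ x) :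
    excess p (insert e x) = excess p x + 1 := by
  rw [excess, excess, insert_sdiff_of_notMem _ he,
    card_insert_of_notMem fun h => hx (mem_sdiff.1 h).1]

theorem deficit_erase_of_mem {e : ℕ} {y : Finset ℕ} (he : e ∈ Icc 1 p) (hy : e ∈ y) :
    deficit p (y.erase e) = deficit p y + 1 := by
  have := deficit_insert_of_mem he (notMem_erase e y)
  rw [insert_erase hy] at this
  omega

theorem excess_erase_of_mem {e : ℕ} {y : Finset ℕ} (he : e ∈ Icc 1 p) (hy : e ∈ y) :
    excess p (y.erase e) = excess p y := by
  rw [← excess_insert_of_mem (y.erase e) he, insert_erase hy]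

theorem deficit_erase_of_notMem {e : ℕ} {y : Finset ℕ} (he : e ∉ Icc 1 p) (hy : e ∈ y) :
    deficit p (y.erase e) = deficit p y := by
  rw [← deficit_insert_of_notMem (y.erase e) he, insert_erase hy]

theorem excess_erase_of_notMem {e : ℕ} {y : Finset ℕ} (he : e ∉ Icc 1 p) (hy : e ∈ y) :
    excess p (y.erase e) + 1 = excess p y := by
  rw [← excess_insert_of_notMem he (notMem_erase e y), insert_erase hy]

variable (p q ρ) in
def hullFinset : Finset (Finset ℕ) :=
  {S ∈ (Icc 1 (p + q)).powerset | deficit p S ≤ ρ ∧ excess p S ≤ ρ}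

variable (p q ρ) in
def hullLevel (m : ℕ) : Finset (Finset ℕ) := {S ∈ hullFinset p q ρ | hammingRank p ρ S = m}

theorem mem_hullFinset {S : Finset ℕ} : S ∈ hullFinset p q ρ ↔ memConvexHull p q ρ S := by
  rw [hullFinset, mem_filter, mem_powerset]
  rfl

theorem hammingRank_le {S : Finset ℕ} (hS : S ∈ hullFinset p q ρ) :
    hammingRank p ρ S ≤ min p ρ + min q ρ := by
  simp only [hullFinset, mem_filter, mem_powerset] at hS
  have := excess_le hS.1
  rw [hammingRank_eq]
  omega

theorem mem_hullLevel {m : ℕ} {S : Finset ℕ} : S ∈ hullLevel p q ρ m ↔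
    S ⊆ Icc 1 (p + q) ∧ deficit p S ≤ min p ρ ∧ excess p S ≤ min q ρ ∧
      min p ρ + excess p S = m + deficit p S := by
  rw [hullLevel, mem_filter, hullFinset, mem_filter, mem_powerset, hammingRank_eq]
  constructor
  · rintro ⟨⟨hS, hi, hj⟩, rfl⟩
    have := deficit_le (p := p) S
    have := excess_le hS
    exact ⟨hS, by omega, by omega, by omega⟩
  · rintro ⟨hS, hi, hj, hm⟩
    exact ⟨⟨hS, by omega, by omega⟩, by omega⟩

theorem hammingRank_of_mem_hullLevel {m : ℕ} {S : Finset ℕ} (hS : S ∈ hullLevel p q ρ m) :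
    hammingRank p ρ S = m :=
  (mem_filter.1 hS).2

variable (p q ρ) in
noncomputable def coverWeight (x y : Finset ℕ) : ℝ :=
  if excess p y = excess p x then insideWeight p q ρ (hammingRank p ρ x) (excess p x)
  else outsideWeight p q ρ (hammingRank p ρ x) (excess p x)

variable (p q ρ) in
noncomputable def flow (x y : Finset ℕ) : ℝ := if x ⋖ y then coverWeight p q ρ x y else 0

theorem flow_nonneg {m : ℕ} (hm : m < min p ρ + min q ρ) {x : Finset ℕ}
    (hx : x ∈ hullLevel p q ρ m) (y : Finset ℕ) : 0 ≤ flow p q ρ x y := by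
  rw [flow, coverWeight, hammingRank_of_mem_hullLevel hx]
  split_ifs
  · exact insideWeight_nonneg hm _
  · exact outsideWeight_nonneg hm _
  · exact le_rfl

theorem le_of_flow_ne_zero {x y : Finset ℕ} (h : flow p q ρ x y ≠ 0) : x ≤ y := by
  by_contra hxy
  exact h (by rw [flow, if_neg fun hc => hxy hc.le])

theorem ite_coverWeight_insert {m : ℕ} (hm : m < min p ρ + min q ρ) {x : Finset ℕ}
    (hx : x ∈ hullLevel p q ρ m) {e : ℕ} (he : e ∈ Icc 1 (p + q) \ x) :
    (if insert e x ∈ hullLevel p q ρ (m + 1) then coverWeight p q ρ x (insert e x) else 0) =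
      if e ∈ Icc 1 p then insideWeight p q ρ m (excess p x)
      else outsideWeight p q ρ m (excess p x) := by
  obtain ⟨hxU, hi, hj, hrank⟩ := mem_hullLevel.1 hx
  obtain ⟨heU, hex⟩ := mem_sdiff.1 he
  rw [coverWeight, hammingRank_of_mem_hullLevel hx]
  by_cases heP : e ∈ Icc 1 p
  · have h₁ := deficit_insert_of_mem heP hex
    have h₂ := excess_insert_of_mem x heP
    rw [if_pos (mem_hullLevel.2 ⟨insert_subset heU hxU, by omega, by omega, by omega⟩),
      if_pos h₂, if_pos heP]
  · have h₁ := deficit_insert_of_notMem x heP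
    have h₂ := excess_insert_of_notMem heP hex
    rw [if_neg (show excess p (insert e x) ≠ excess p x by omega), if_neg heP]
    -- `insert e x` leaves the hull only from column `min q ρ`, where the outside weight vanishes
    by_cases hjq : excess p x < min q ρ
    · rw [if_pos (mem_hullLevel.2 ⟨insert_subset heU hxU, by omega, by omega, by omega⟩)]
    · rw [outsideWeight_eq_zero (by omega) (by omega), ite_self]

theorem ite_coverWeight_erase {m : ℕ} {y : Finset ℕ} (hy : y ∈ hullLevel p q ρ (m + 1))
    {e : ℕ} (he : e ∈ y) :
    (if y.erase e ∈ hullLevel p q ρ m then coverWeight p q ρ (y.erase e) y else 0) =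
      if e ∈ Icc 1 p then insideWeight p q ρ m (excess p y)
      else outsideWeight p q ρ m (excess p y - 1) := by
  obtain ⟨hyU, hi, hj, hrank⟩ := mem_hullLevel.1 hy
  have hsub : y.erase e ⊆ Icc 1 (p + q) := (erase_subset e y).trans hyU
  rw [coverWeight]
  by_cases heP : e ∈ Icc 1 p
  · have h₁ := deficit_erase_of_mem heP he
    have h₂ := excess_erase_of_mem heP he
    rw [if_pos heP]
    -- `y.erase e` leaves the hull only if `y` lies in column `m + 1`, where the inside weight
    -- vanishes
    by_cases hin : deficit p y < min p ρ
    · have hx : y.erase e ∈ hullLevel p q ρ m :=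
        mem_hullLevel.2 ⟨hsub, by omega, by omega, by omega⟩
      rw [if_pos hx, if_pos h₂.symm, hammingRank_of_mem_hullLevel hx, h₂]
    · rw [if_neg fun hx => by have := (mem_hullLevel.1 hx).2.1; omega,
        insideWeight_eq_zero (by omega) (by omega)]
  · have h₁ := deficit_erase_of_notMem heP he
    have h₂ := excess_erase_of_notMem heP he
    have hx : y.erase e ∈ hullLevel p q ρ m :=
      mem_hullLevel.2 ⟨hsub, by omega, by omega, by omega⟩
    rw [if_neg heP, if_pos hx, if_neg (show excess p y ≠ excess p (y.erase e) by omega),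
      hammingRank_of_mem_hullLevel hx, show excess p (y.erase e) = excess p y - 1 by omega]

theorem sum_flow_out {m : ℕ} (hm : m < min p ρ + min q ρ) {x : Finset ℕ}
    (hx : x ∈ hullLevel p q ρ m) :
    ∑ y ∈ hullLevel p q ρ (m + 1), flow p q ρ x y = 1 / convexHullLayerSize p q ρ m := by
  obtain ⟨hxU, hi, hj, hrank⟩ := mem_hullLevel.1 hx
  have hinside : {e ∈ Icc 1 (p + q) \ x | e ∈ Icc 1 p} = Icc 1 p \ x := by
    ext e
    simp only [mem_filter, mem_sdiff]
    exact ⟨fun h => ⟨h.2, h.1.2⟩,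
      fun h => ⟨⟨Icc_subset_Icc_right (by omega) h.1, h.2⟩, h.1⟩⟩
  have houtside : {e ∈ Icc 1 (p + q) \ x | e ∉ Icc 1 p} =
      (Icc 1 (p + q) \ Icc 1 p) \ (x \ Icc 1 p) := by
    ext e
    simp only [mem_filter, mem_sdiff]
    tauto
  have hdeficit : #(Icc 1 p \ x) = min p ρ + excess p x - m := by
    change deficit p x = _
    omega
  unfold flow
  rw [sum_ite_covBy_eq_sum_insert (fun y hy => (mem_hullLevel.1 hy).1),
    sum_congr rfl fun e he => ite_coverWeight_insert hm hx he, sum_ite, sum_const, sum_const,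
    hinside, houtside, card_sdiff_of_subset (sdiff_subset_sdiff hxU subset_rfl),
    card_Icc_sdiff_Icc, hdeficit, nsmul_eq_mul, nsmul_eq_mul]
  exact mul_insideWeight_add_mul_outsideWeight_eq hm (by omega) (by omega) hj

theorem sum_flow_in {m : ℕ} {y : Finset ℕ} (hy : y ∈ hullLevel p q ρ (m + 1)) :
    ∑ x ∈ hullLevel p q ρ m, flow p q ρ x y = 1 / convexHullLayerSize p q ρ (m + 1) := by
  obtain ⟨hyU, hi, hj, hrank⟩ := mem_hullLevel.1 hy
  have hinside : #(y ∩ Icc 1 p) = p - (min p ρ + excess p y - (m + 1)) := by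
    have := card_inter_add_card_sdiff (Icc 1 p) y
    rw [inter_comm, Nat.card_Icc] at this
    change _ + deficit p y = _ at this
    omega
  unfold flow
  rw [sum_ite_covBy_eq_sum_erase, sum_congr rfl fun e he => ite_coverWeight_erase hy he, sum_ite,
    sum_const, sum_const, filter_mem_eq_inter, filter_notMem_eq_sdiff, hinside, nsmul_eq_mul,
    nsmul_eq_mul]
  exact mul_insideWeight_add_mul_outsideWeight_pred_eq (by omega) (by omega) hj

theorem card_div_le_card_filter_exists_le_div {m : ℕ} (hm : m < min p ρ + min q ρ)
    {F : Finset (Finset ℕ)} (hF : F ⊆ hullLevel p q ρ m) :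
    #F / (convexHullLayerSize p q ρ m : ℝ) ≤
      #{y ∈ hullLevel p q ρ (m + 1) | ∃ x ∈ F, x ≤ y} /
        (convexHullLayerSize p q ρ (m + 1) : ℝ) := by
  simpa only [mul_one_div] using card_mul_le_card_filter_exists_mul_of_flow
    (fun x hx y _ => flow_nonneg hm hx y) (fun x _ y _ => le_of_flow_ne_zero)
    (fun x hx => sum_flow_out hm hx) (fun y hy => (sum_flow_in hy).le) hF

theorem card_hullLevel_top_le :
    #(hullLevel p q ρ (min p ρ + min q ρ)) ≤ q.choose (min q ρ) := by
  calc #(hullLevel p q ρ (min p ρ + min q ρ))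
      ≤ #((Icc 1 (p + q) \ Icc 1 p).powersetCard (min q ρ)) := by
        refine card_le_card_of_injOn (· \ Icc 1 p) (fun S hS => ?_) fun S hS T hT hST => ?_
        · obtain ⟨hSU, -, hj, hrank⟩ := mem_hullLevel.1 hS
          exact mem_powersetCard.2
            ⟨sdiff_subset_sdiff hSU subset_rfl, by change excess p S = _; omega⟩
        · have hP {S : Finset ℕ} (hS : S ∈ hullLevel p q ρ (min p ρ + min q ρ)) :
              Icc 1 p ⊆ S := by
            obtain ⟨-, -, hj, hrank⟩ := mem_hullLevel.1 hS
            exact sdiff_eq_empty_iff_subset.1 (card_eq_zero.1 (show deficit p S = 0 by omega))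
          rw [← union_sdiff_of_subset (hP hS), ← union_sdiff_of_subset (hP hT)]
          exact congrArg _ hST
    _ = q.choose (min q ρ) := by rw [card_powersetCard, card_Icc_sdiff_Icc]

end HammingBallHull

open HammingBallHull

/-- The smallest convex subposet of `(2^{[p+q]}, ⊆)` containing the Hamming ball
`B_ρ[p,q]` is a LYM poset: every antichain `A` (with respect to inclusion) of subsets
`S ⊆ {1,…,p+q}` with `|{1,…,p} \ S| ≤ ρ` and `|S \ {1,…,p}| ≤ ρ` satisfies
`∑_{S ∈ A} 1 / M_{r(S)} ≤ 1`. -/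
theorem convexHull_hammingBall_isLYM (p q ρ : ℕ) (A : Finset (Finset ℕ))
    (hA : ∀ S ∈ A, memConvexHull p q ρ S)
    (hanti : IsAntichain (· ⊆ ·) (A : Set (Finset ℕ))) :
    ∑ S ∈ A, (1 : ℝ) / convexHullLayerSize p q ρ (hammingRank p ρ S) ≤ 1 := by
  refine IsAntichain.sum_one_div_le_one_of_normalizedMatching (Q := hullFinset p q ρ)
    (r := hammingRank p ρ) (M := fun k => (convexHullLayerSize p q ρ k : ℝ))
    (n := min p ρ + min q ρ) hanti (fun S hS => mem_hullFinset.2 (hA S hS))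
    (fun S hS => hammingRank_le hS) (fun k hk => by exact_mod_cast convexHullLayerSize_pos hk)
    (fun m hm F hF => card_div_le_card_filter_exists_le_div hm hF) ?_
  rw [convexHullLayerSize_top]
  exact_mod_cast card_hullLevel_top_le
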